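/- arXiv:2302.02462 — 8 statements merged into one kernel-verified Lean document; each statement's English description precedes it below -/
import Mathlib

section
/- For every type T of the metalanguage and every term t, if Red_T(t) holds then t is strongly normalizing under ≻̇. -/
/-!
Metalanguage for algebraic effects (Moggi-style `let` + effect/function symbols),
with the Recursive Path Ordering, following the paper.

Terms use de Bruijn indices.  A signature assigns each rewritable symbol an
arity, tells whether it is an effect symbol or a function symbol, and (for
function symbols) gives argument types and a result type.
-/

/-- Types of the metalanguage: base types, effect (computation) types `E T`,
and arrow types. -/
inductive Ty (B : Type) : Type where
  | base : B → Ty B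
  | eff : Ty B → Ty B
  | arrow : Ty B → Ty B → Ty B

/-- A signature of rewritable symbols. -/
structure Signature (Sym B : Type) : Type where
  arity : Sym → ℕ
  isEffect : Sym → Prop
  argTy : (γ : Sym) → Fin (arity γ) → Ty B
  resTy : Sym → Ty B

/-- Terms of the metalanguage (de Bruijn indices):
variables, λ-abstraction, application, `pure`, symbol application, and `let`. -/
inductive Tm {Sym B : Type} (Sg : Signature Sym B) : Type where
  | var : ℕ → Tm Sg
  | lam : Tm Sg → Tm Sg
  | app : Tm Sg → Tm Sg → Tm Sg
  | pure : Tm Sg → Tm Sg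
  | sym : (γ : Sym) → (Fin (Sg.arity γ) → Tm Sg) → Tm Sg
  | letin : Tm Sg → Tm Sg → Tm Sg

namespace Tm

variable {Sym B : Type} {Sg : Signature Sym B}

/-- Lift a renaming under a binder. -/
def upRen (ρ : ℕ → ℕ) : ℕ → ℕ
  | 0 => 0
  | n + 1 => ρ n + 1

/-- Renaming of de Bruijn variables. -/
def rename (ρ : ℕ → ℕ) : Tm Sg → Tm Sg
  | .var n => .var (ρ n)
  | .lam u => .lam (u.rename (upRen ρ))
  | .app s t => .app (s.rename ρ) (t.rename ρ)
  | .pure t => .pure (t.rename ρ)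
  | .sym γ ts => .sym γ (fun i => (ts i).rename ρ)
  | .letin t u => .letin (t.rename ρ) (u.rename (upRen ρ))

/-- Lift a substitution under a binder. -/
def upSub (σ : ℕ → Tm Sg) : ℕ → Tm Sg
  | 0 => .var 0
  | n + 1 => (σ n).rename Nat.succ

/-- Simultaneous (capture-avoiding) substitution. -/
def subst (σ : ℕ → Tm Sg) : Tm Sg → Tm Sg
  | .var n => σ n
  | .lam u => .lam (u.subst (upSub σ))
  | .app s t => .app (s.subst σ) (t.subst σ)
  | .pure t => .pure (t.subst σ)
  | .sym γ ts => .sym γ (fun i => (ts i).subst σ)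
  | .letin t u => .letin (t.subst σ) (u.subst (upSub σ))

/-- `subst0 t u` is `u{t/x}`: substitute `t` for the outermost variable of `u`. -/
def subst0 (t : Tm Sg) (u : Tm Sg) : Tm Sg :=
  u.subst (fun n => match n with | 0 => t | n + 1 => .var n)

/-- `FreeIn x t`: the de Bruijn variable `x` occurs free in `t`. -/
def FreeIn : Tm Sg → ℕ → Prop
  | .var n, x => x = n
  | .lam u, x => u.FreeIn (x + 1)
  | .app s t, x => s.FreeIn x ∨ t.FreeIn x
  | .pure t, x => t.FreeIn x
  | .sym _ ts, x => ∃ i, (ts i).FreeIn x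
  | .letin t u, x => t.FreeIn x ∨ u.FreeIn (x + 1)

end Tm

/-- The recursive path ordering `s ≻ t` generated by a precedence `gt` on symbols:
(1) same head symbol, lexicographically smaller arguments, and `s` dominates every
argument of `t`; (2) smaller head symbol and `s` dominates every argument of `t`;
(3) some argument `sᵢ` of `s` satisfies `sᵢ ⪰ t`. -/
inductive RPO {Sym B : Type} {Sg : Signature Sym B} (gt : Sym → Sym → Prop) :
    Tm Sg → Tm Sg → Prop where
  | lexArgs {γ : Sym} {s t : Fin (Sg.arity γ) → Tm Sg} (i : Fin (Sg.arity γ))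
      (hpre : ∀ j, j < i → s j = t j) (hlt : RPO gt (s i) (t i))
      (hdom : ∀ j, RPO gt (.sym γ s) (t j)) :
      RPO gt (.sym γ s) (.sym γ t)
  | symGt {γ γ' : Sym} {s : Fin (Sg.arity γ) → Tm Sg} {t : Fin (Sg.arity γ') → Tm Sg}
      (hγ : gt γ γ') (hdom : ∀ j, RPO gt (.sym γ s) (t j)) :
      RPO gt (.sym γ s) (.sym γ' t)
  | subtermLt {γ : Sym} {s : Fin (Sg.arity γ) → Tm Sg} (i : Fin (Sg.arity γ)) {t : Tm Sg}
      (h : RPO gt (s i) t) :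
      RPO gt (.sym γ s) t
  | subtermEq {γ : Sym} {s : Fin (Sg.arity γ) → Tm Sg} (i : Fin (Sg.arity γ)) {t : Tm Sg}
      (h : s i = t) :
      RPO gt (.sym γ s) t

/-- The relation `≻̇`: the compatible closure (closure under all term contexts)
of the union of the RPO `≻` and the metalanguage rewrites `⇝ml`
(abs-β, let-β, let-assoc, eff-assoc). -/
inductive Step {Sym B : Type} {Sg : Signature Sym B} (gt : Sym → Sym → Prop) :
    Tm Sg → Tm Sg → Prop where
  | rpo {s t : Tm Sg} : RPO gt s t → Step gt s t
  | beta {u t : Tm Sg} : Step gt (.app (.lam u) t) (Tm.subst0 t u)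
  | letBeta {t u : Tm Sg} : Step gt (.letin (.pure t) u) (Tm.subst0 t u)
  | letAssoc {t₁ t₂ u : Tm Sg} :
      Step gt (.letin (.letin t₁ t₂) u)
        (.letin t₁ (.letin t₂ (u.rename (Tm.upRen Nat.succ))))
  | effAssoc {e : Sym} {ts : Fin (Sg.arity e) → Tm Sg} {u : Tm Sg} (he : Sg.isEffect e) :
      Step gt (.letin (.sym e ts) u) (.sym e fun i => .letin (ts i) u)
  | congLam {u u' : Tm Sg} : Step gt u u' → Step gt (.lam u) (.lam u')
  | congApp₁ {s s' t : Tm Sg} : Step gt s s' → Step gt (.app s t) (.app s' t)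
  | congApp₂ {s t t' : Tm Sg} : Step gt t t' → Step gt (.app s t) (.app s t')
  | congPure {t t' : Tm Sg} : Step gt t t' → Step gt (.pure t) (.pure t')
  | congSym {γ : Sym} {ts : Fin (Sg.arity γ) → Tm Sg} {i : Fin (Sg.arity γ)} {t' : Tm Sg} :
      Step gt (ts i) t' → Step gt (.sym γ ts) (.sym γ (Function.update ts i t'))
  | congLet₁ {t t' u : Tm Sg} : Step gt t t' → Step gt (.letin t u) (.letin t' u)
  | congLet₂ {t u u' : Tm Sg} : Step gt u u' → Step gt (.letin t u) (.letin t u')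

/-- `SN gt t`: `t` is strongly normalizing under `≻̇` (every reduction sequence
from `t` terminates, i.e. `t` is accessible for the converse of `Step gt`). -/
def SN {Sym B : Type} {Sg : Signature Sym B} (gt : Sym → Sym → Prop) (t : Tm Sg) : Prop :=
  Acc (fun a b => Step gt b a) t

/-- Continuations: stacks of frames `let x ⇐ [] in u`. -/
inductive Kont {Sym B : Type} (Sg : Signature Sym B) : Type where
  | nil : Kont Sg
  | cons : Kont Sg → Tm Sg → Kont Sg

namespace Kont

variable {Sym B : Type} {Sg : Signature Sym B}

/-- `K.plug t` = `K@t`: plug a term into the hole of a continuation. -/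
def plug : Kont Sg → Tm Sg → Tm Sg
  | .nil, t => t
  | .cons K u, t => K.plug (.letin t u)

/-- `|K|`: the number of frames of a continuation. -/
def len : Kont Sg → ℕ
  | .nil => 0
  | .cons K _ => K.len + 1

end Kont

/-- The reducibility predicate, by recursion on the type:
`Red B t = SN t`; `Red (S→T) s` means `s t` is reducible for every reducible `t`;
`Red (E T) t` means `K@t` is SN for every continuation `K ∈ Red_T^⊤`. -/
def Red {Sym B : Type} {Sg : Signature Sym B} (gt : Sym → Sym → Prop) :
    Ty B → Tm Sg → Prop
  | .base _, t => SN gt t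
  | .arrow S T, s => ∀ t : Tm Sg, Red gt S t → Red gt T (.app s t)
  | .eff T, t => ∀ K : Kont Sg,
      (∀ u : Tm Sg, Red gt T u → SN gt (K.plug (.pure u))) → SN gt (K.plug t)

/-- `Red_T^⊤(K)`: `K@pure(t)` is SN for every `t ∈ Red_T`. -/
def RedTop {Sym B : Type} {Sg : Signature Sym B} (gt : Sym → Sym → Prop)
    (T : Ty B) (K : Kont Sg) : Prop :=
  ∀ t : Tm Sg, Red gt T t → SN gt (K.plug (.pure t))

/-- Typing judgment `Γ ⊢ t : T` of the metalanguage (contexts are lists of types,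
read by de Bruijn index).  Effect symbols take `n` arguments of a common type
`E T` and return `E T`; function symbols follow their declared signature. -/
inductive HasTy {Sym B : Type} (Sg : Signature Sym B) :
    List (Ty B) → Tm Sg → Ty B → Prop where
  | var {Γ : List (Ty B)} {n : ℕ} {T : Ty B} :
      Γ[n]? = some T → HasTy Sg Γ (.var n) T
  | lam {Γ : List (Ty B)} {S T : Ty B} {u : Tm Sg} :
      HasTy Sg (S :: Γ) u T → HasTy Sg Γ (.lam u) (.arrow S T)
  | app {Γ : List (Ty B)} {S T : Ty B} {s t : Tm Sg} :
      HasTy Sg Γ s (.arrow S T) → HasTy Sg Γ t S → HasTy Sg Γ (.app s t) T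
  | pure {Γ : List (Ty B)} {T : Ty B} {t : Tm Sg} :
      HasTy Sg Γ t T → HasTy Sg Γ (.pure t) (.eff T)
  | letin {Γ : List (Ty B)} {S T : Ty B} {t u : Tm Sg} :
      HasTy Sg Γ t (.eff S) → HasTy Sg (S :: Γ) u (.eff T) →
      HasTy Sg Γ (.letin t u) (.eff T)
  | effSym {Γ : List (Ty B)} {T : Ty B} {e : Sym} {ts : Fin (Sg.arity e) → Tm Sg} :
      Sg.isEffect e → (∀ i, HasTy Sg Γ (ts i) (.eff T)) →
      HasTy Sg Γ (.sym e ts) (.eff T)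
  | funSym {Γ : List (Ty B)} {f : Sym} {ts : Fin (Sg.arity f) → Tm Sg} :
      ¬ Sg.isEffect f → (∀ i, HasTy Sg Γ (ts i) (Sg.argTy f i)) →
      HasTy Sg Γ (.sym f ts) (Sg.resTy f)


section Aux

variable {Sym B : Type} {Sg : Signature Sym B} {gt : Sym → Sym → Prop}

/-- Neutral terms: a variable applied to a stack of arguments. -/
inductive Neut {Sym B : Type} {Sg : Signature Sym B} : Tm Sg → Prop where
  | var {n : ℕ} : Neut (.var n)
  | app {s t : Tm Sg} : Neut s → Neut (.app s t)

lemma neutPreserve {X X' : Tm Sg} (hN : Neut X) (hs : Step gt X X') : Neut X' := by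
  induction hN generalizing X' with
  | var => cases hs with | rpo h => cases h
  | app hN' ih =>
    cases hs with
    | rpo h => cases h
    | beta => cases hN'
    | congApp₁ h => exact .app (ih h)
    | congApp₂ h => exact .app hN'

lemma snVar {n : ℕ} : SN gt (Tm.var n : Tm Sg) :=
  ⟨_, fun _ hy => by cases hy with | rpo h => cases h⟩

lemma snPure {t : Tm Sg} (ht : SN gt t) : SN gt (.pure t) := by
  induction ht with
  | intro t _ ih =>
    constructor
    intro y hy
    cases hy with
    | rpo h => cases h
    | congPure h => exact ih _ h

lemma snApp {X : Tm Sg} (hX : SN gt X) : Neut X → ∀ {t : Tm Sg}, SN gt t →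
    SN gt (.app X t) := by
  induction hX with
  | intro X hX2 ihX =>
    intro hN t ht
    induction ht with
    | intro t ht2 iht =>
      constructor
      intro y hy
      cases hy with
      | rpo h => cases h
      | beta => cases hN
      | congApp₁ h => exact ihX _ h (neutPreserve hN h) ⟨t, ht2⟩
      | congApp₂ h => exact iht _ h

lemma snAppInv {a : Tm Sg} (ha : SN gt a) : ∀ {s t : Tm Sg}, a = .app s t → SN gt s := by
  induction ha with
  | intro a _ ih =>
    intro s t he
    subst he
    constructor
    intro s' hs'
    exact ih _ (Step.congApp₁ hs') rfl

/-- `Spine' t0 X a b` : `a` and `b` are the same stack of `let`-frames, filled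
with `X` (a neutral term) on the left and `pure t0` on the right. -/
inductive Spine' {Sym B : Type} {Sg : Signature Sym B} (t0 : Tm Sg) :
    Tm Sg → Tm Sg → Tm Sg → Prop where
  | base {X : Tm Sg} : Spine' t0 X X (.pure t0)
  | cons {X a b u : Tm Sg} : Spine' t0 X a b → Spine' t0 X (.letin a u) (.letin b u)

lemma plugSpine {t0 X : Tm Sg} (K : Kont Sg) {a b : Tm Sg} (h : Spine' t0 X a b) :
    Spine' t0 X (K.plug a) (K.plug b) := by
  induction K generalizing a b with
  | nil => exact h
  | cons K u ih => exact ih (.cons h)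

lemma stepDecomp {t0 X a b : Tm Sg} (hsp : Spine' t0 X a b) (hN : Neut X) :
    ∀ {s : Tm Sg}, Step gt a s →
      (∃ s', Step gt b s' ∧ Spine' t0 X s s') ∨
      (∃ X', Step gt X X' ∧ Spine' t0 X' s b) := by
  induction hsp with
  | base => exact fun hs => Or.inr ⟨_, hs, .base⟩
  | cons hsp' ih =>
    intro s hs
    cases hs with
    | rpo h => cases h
    | letBeta =>
      cases hsp' with
      | base => cases hN
    | effAssoc he =>
      cases hsp' with
      | base => cases hN
    | letAssoc =>
      cases hsp' with
      | base => cases hN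
      | cons h' => exact Or.inl ⟨_, Step.letAssoc, .cons h'⟩
    | congLet₁ h =>
      rcases ih h with ⟨s', hb, hsp2⟩ | ⟨X', hX, hsp2⟩
      · exact Or.inl ⟨_, Step.congLet₁ hb, .cons hsp2⟩
      · exact Or.inr ⟨X', hX, .cons hsp2⟩
    | congLet₂ h => exact Or.inl ⟨_, Step.congLet₂ h, .cons hsp'⟩

lemma lemB {t0 : Tm Sg} {b : Tm Sg} (hb : SN gt b) :
    ∀ X : Tm Sg, SN gt X → Neut X → ∀ a : Tm Sg, Spine' t0 X a b → SN gt a := by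
  induction hb with
  | intro b hb2 ihb =>
    intro X hX
    induction hX with
    | intro X hX2 ihX =>
      intro hN a hsp
      constructor
      intro s hs
      rcases stepDecomp hsp hN hs with ⟨s', hbs, hsp'⟩ | ⟨X', hXs, hsp'⟩
      · exact ihb s' hbs X ⟨X, hX2⟩ hN s hsp'
      · exact ihX X' hXs (neutPreserve hN hXs) s hsp'

lemma redProps : ∀ T : Ty B,
    (∀ X : Tm Sg, Neut X → SN gt X → Red gt T X) ∧
    (∀ t : Tm Sg, Red gt T t → SN gt t) := by
  intro T
  induction T with
  | base b =>
    exact ⟨fun X _ hX => hX, fun t ht => ht⟩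
  | eff T ih =>
    constructor
    · intro X hN hX K hK
      have hred : Red gt T (.var 0) := ih.1 _ .var snVar
      exact lemB (hK _ hred) X hX hN _ (plugSpine K .base)
    · intro t ht
      have := ht .nil (fun u hu => snPure (ih.2 u hu))
      exact this
  | arrow S T ihS ihT =>
    constructor
    · intro X hN hX t ht
      exact ihT.1 _ (.app hN) (snApp hX hN (ihS.2 t ht))
    · intro s hs
      have h1 : Red gt T (.app s (.var 0)) := hs _ (ihS.1 _ .var snVar)
      exact snAppInv (ihT.2 _ h1) rfl

end Aux

/-- For every type `T` and every term `t`, if `Red_T(t)` holds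
then `t` is strongly normalizing under `≻̇`. -/
theorem red_sn {Sym B : Type} {Sg : Signature Sym B} (gt : Sym → Sym → Prop)
    (hwf : WellFounded (fun a b : Sym => gt b a)) (htrans : Transitive gt)
    (T : Ty B) (t : Tm Sg) (h : Red gt T t) : SN gt t := by
  exact (redProps T).2 t h
end

section
/- For any type T and any neutral term s (i.e. s is an application or a variable), if every reduct s' of s (every s' with s ≻̇ s') satisfies Red_T(s'), then Red_T(s). -/
/-- A term is neutral if it is an application or a variable. -/
def Neutral {Sym B : Type} {Sg : Signature Sym B} : Tm Sg → Prop
  | .var _ => True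
  | .app _ _ => True
  | _ => False

section Aux

variable {Sym B : Type} {Sg : Signature Sym B} {gt : Sym → Sym → Prop}

lemma no_step_var {n : ℕ} {r : Tm Sg} (h : Step gt (.var n) r) : False := by
  cases h with
  | rpo h0 => cases h0

lemma plug_step (K : Kont Sg) {t t' : Tm Sg} (h : Step gt t t') :
    Step gt (K.plug t) (K.plug t') := by
  induction K generalizing t t' with
  | nil => exact h
  | cons K u ih => exact ih (Step.congLet₁ h)

lemma sn_app_left {s t : Tm Sg} (h : SN gt (Tm.app s t)) : SN gt s := by
  have key : ∀ p, Acc (fun a b => Step gt b a) p → ∀ s t : Tm Sg, p = .app s t →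
      Acc (fun a b => Step gt b a) s := by
    intro p hp
    induction hp with
    | intro p _ ih =>
      rintro s t rfl
      constructor; intro s' hs'
      exact ih _ (Step.congApp₁ hs') s' t rfl
  exact key _ h s t rfl

lemma sn_pure {u : Tm Sg} (h : SN gt u) : SN gt (Tm.pure u) := by
  induction h with
  | intro u _ ih =>
    constructor; intro r hr
    cases hr with
    | rpo h0 => cases h0
    | congPure h1 => exact ih _ h1

/-- Decomposition of a step out of `K.plug t`. -/
lemma plug_step_cases (K : Kont Sg) :
    ∀ t r : Tm Sg, Step gt (K.plug t) r →
    (∃ t', Step gt t t' ∧ r = K.plug t') ∨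
    (∃ K' : Kont Sg, (∀ a, Step gt (K.plug a) (K'.plug a)) ∧ r = K'.plug t) ∨
    (∃ K₀ u, K = .cons K₀ u ∧
      ((∃ t0, t = .pure t0 ∧ r = K₀.plug (Tm.subst0 t0 u)) ∨
       (∃ e ts, t = .sym e ts ∧ r = K₀.plug (.sym e fun i => .letin (ts i) u)) ∨
       (∃ t1 t2, t = .letin t1 t2 ∧
         r = (Kont.cons K₀ (.letin t2 (u.rename (Tm.upRen Nat.succ)))).plug t1))) := by
  induction K with
  | nil => intro t r h; exact Or.inl ⟨r, h, rfl⟩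
  | cons K u ih =>
    intro t r h
    rcases ih (Tm.letin t u) r h with ⟨w, hw, rfl⟩ | ⟨K', hK', rfl⟩ | ⟨K₀, u₀, rfl, hcase⟩
    · cases hw with
      | rpo h0 => cases h0
      | letBeta => exact Or.inr (Or.inr ⟨K, u, rfl, Or.inl ⟨_, rfl, rfl⟩⟩)
      | letAssoc =>
        exact Or.inr (Or.inr ⟨K, u, rfl, Or.inr (Or.inr ⟨_, _, rfl, rfl⟩)⟩)
      | effAssoc he => exact Or.inr (Or.inr ⟨K, u, rfl, Or.inr (Or.inl ⟨_, _, rfl, rfl⟩)⟩)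
      | congLet₁ h1 => exact Or.inl ⟨_, h1, rfl⟩
      | congLet₂ h2 =>
        exact Or.inr (Or.inl ⟨.cons K _, fun a => plug_step K (Step.congLet₂ h2), rfl⟩)
    · exact Or.inr (Or.inl ⟨.cons K' u, fun a => hK' (.letin a u), rfl⟩)
    · rcases hcase with ⟨t0, heq, _⟩ | ⟨e, ts, heq, _⟩ | ⟨t1, t2, heq, hr⟩
      · cases heq
      · cases heq
      · cases heq
        exact Or.inr (Or.inl ⟨.cons K₀ (.letin u (u₀.rename (Tm.upRen Nat.succ))),
          fun a => plug_step K₀ Step.letAssoc, hr⟩)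

/-- CR1, CR2, CR3 simultaneously, by induction on the type. -/
lemma cr (gt : Sym → Sym → Prop) (T : Ty B) :
    (∀ t : Tm Sg, Red gt T t → SN gt t) ∧
    (∀ t t' : Tm Sg, Red gt T t → Step gt t t' → Red gt T t') ∧
    (∀ s : Tm Sg, Neutral s → (∀ s', Step gt s s' → Red gt T s') → Red gt T s) := by
  induction T with
  | base b =>
    refine ⟨fun t ht => ht, fun t t' ht hst => ht.inv hst, fun s _ h => ?_⟩
    constructor; intro r hr; exact h r hr
  | arrow S T ihS ihT =>
    have hvar : Red gt S (Tm.var 0) :=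
      ihS.2.2 _ trivial (fun s' hs' => absurd hs' no_step_var)
    refine ⟨?_, ?_, ?_⟩
    · intro s hs
      exact sn_app_left (ihT.1 _ (hs _ hvar))
    · intro t t' ht hst u hu
      exact ihT.2.1 _ _ (ht u hu) (Step.congApp₁ hst)
    · intro s hn h t ht
      have key : ∀ t : Tm Sg, Acc (fun a b => Step gt b a) t → Red gt S t →
          Red gt T (.app s t) := by
        intro t ha
        induction ha with
        | intro t _ ih =>
          intro ht
          apply ihT.2.2 (Tm.app s t) trivial
          intro r hr
          cases hr with
          | rpo h0 => cases h0
          | beta => exact absurd hn (by simp [Neutral])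
          | congApp₁ hs' => exact h _ hs' _ ht
          | congApp₂ ht' => exact ih _ ht' (ihS.2.1 _ _ ht ht')
      exact key t (ihS.1 t ht) ht
  | eff T ihT =>
    have hvar : Red gt T (Tm.var 0) :=
      ihT.2.2 _ trivial (fun s' hs' => absurd hs' no_step_var)
    refine ⟨?_, ?_, ?_⟩
    · intro t ht
      exact ht .nil (fun u hu => sn_pure (ihT.1 u hu))
    · intro t t' ht hst K hK
      exact (ht K hK).inv (plug_step K hst)
    · intro s hn h K hK
      have key : ∀ p, Acc (fun a b => Step gt b a) p → ∀ K : Kont Sg,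
          p = K.plug (.pure (.var 0)) →
          (∀ u, Red gt T u → SN gt (K.plug (.pure u))) → SN gt (K.plug s) := by
        intro p hp
        induction hp with
        | intro p _ ih =>
          rintro K rfl hK
          constructor; intro r hr
          rcases plug_step_cases K s r hr with ⟨s', hs', rfl⟩ | ⟨K', hKs, rfl⟩ |
            ⟨K₀, u, rfl, hcase⟩
          · exact h s' hs' K hK
          · exact ih _ (hKs (.pure (.var 0))) K' rfl
              (fun u hu => (hK u hu).inv (hKs (.pure u)))
          · rcases hcase with ⟨t0, h1, _⟩ | ⟨e, ts, h1, _⟩ | ⟨t1, t2, h1, _⟩ <;>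
              (subst h1; exact absurd hn (by simp [Neutral]))
      exact key _ (hK _ hvar) K rfl hK

end Aux

/-- For any type `T` and neutral term `s`, if every reduct `s'`
of `s` satisfies `Red_T(s')`, then `Red_T(s)`. -/
theorem red_of_neutral {Sym B : Type} {Sg : Signature Sym B} (gt : Sym → Sym → Prop)
    (hwf : WellFounded (fun a b : Sym => gt b a)) (htrans : Transitive gt)
    (T : Ty B) (s : Tm Sg) (hn : Neutral s)
    (h : ∀ s' : Tm Sg, Step gt s s' → Red gt T s') :
    Red gt T s :=
  (cr gt T).2.2 s hn h
end

section
/- If Red_T(u{t/x}) holds for every term t with Red_S(t), then Red_{S→T}(λx. u). -/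
/-! ### Auxiliary development for strong normalization / reducibility -/

namespace RedLamAux

open Tm

variable {Sym B : Type} {Sg : Signature Sym B} {gt : Sym → Sym → Prop}

/-! #### Substitution calculus -/

theorem upRen_comp (ρ ρ' : ℕ → ℕ) :
    (upRen ρ') ∘ (upRen ρ) = upRen (ρ' ∘ ρ) := by
  funext n; cases n <;> rfl

theorem rename_rename (ρ ρ' : ℕ → ℕ) :
    ∀ t : Tm Sg, (t.rename ρ).rename ρ' = t.rename (ρ' ∘ ρ)
  | .var n => rfl
  | .lam u => by
      simp only [Tm.rename, rename_rename (upRen ρ) (upRen ρ') u, upRen_comp]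
  | .app s t => by
      simp only [Tm.rename, rename_rename ρ ρ' s, rename_rename ρ ρ' t]
  | .pure t => by simp only [Tm.rename, rename_rename ρ ρ' t]
  | .sym γ ts => by
      simp only [Tm.rename]; congr 1; funext i; exact rename_rename ρ ρ' (ts i)
  | .letin t u => by
      simp only [Tm.rename, rename_rename ρ ρ' t,
        rename_rename (upRen ρ) (upRen ρ') u, upRen_comp]

theorem upSub_upRen (σ : ℕ → Tm Sg) (ρ : ℕ → ℕ) :
    (upSub σ) ∘ (upRen ρ) = upSub (σ ∘ ρ) := by
  funext n; cases n <;> rfl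

theorem subst_rename (ρ : ℕ → ℕ) (σ : ℕ → Tm Sg) :
    ∀ t : Tm Sg, (t.rename ρ).subst σ = t.subst (σ ∘ ρ)
  | .var n => rfl
  | .lam u => by
      simp only [Tm.rename, Tm.subst, subst_rename (upRen ρ) (upSub σ) u, upSub_upRen]
  | .app s t => by
      simp only [Tm.rename, Tm.subst, subst_rename ρ σ s, subst_rename ρ σ t]
  | .pure t => by simp only [Tm.rename, Tm.subst, subst_rename ρ σ t]
  | .sym γ ts => by
      simp only [Tm.rename, Tm.subst]; congr 1; funext i; exact subst_rename ρ σ (ts i)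
  | .letin t u => by
      simp only [Tm.rename, Tm.subst, subst_rename ρ σ t,
        subst_rename (upRen ρ) (upSub σ) u, upSub_upRen]

theorem upSub_rename (σ : ℕ → Tm Sg) (ρ : ℕ → ℕ) :
    (fun n => (upSub σ n).rename (upRen ρ)) = upSub (fun n => (σ n).rename ρ) := by
  funext n; cases n with
  | zero => rfl
  | succ n =>
      show ((σ n).rename Nat.succ).rename (upRen ρ) = ((σ n).rename ρ).rename Nat.succ
      rw [rename_rename, rename_rename]
      rfl

theorem rename_subst (σ : ℕ → Tm Sg) (ρ : ℕ → ℕ) :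
    ∀ t : Tm Sg, (t.subst σ).rename ρ = t.subst (fun n => (σ n).rename ρ)
  | .var n => rfl
  | .lam u => by
      simp only [Tm.subst, Tm.rename, rename_subst (upSub σ) (upRen ρ) u, upSub_rename]
  | .app s t => by
      simp only [Tm.subst, Tm.rename, rename_subst σ ρ s, rename_subst σ ρ t]
  | .pure t => by simp only [Tm.subst, Tm.rename, rename_subst σ ρ t]
  | .sym γ ts => by
      simp only [Tm.subst, Tm.rename]; congr 1; funext i; exact rename_subst σ ρ (ts i)
  | .letin t u => by
      simp only [Tm.subst, Tm.rename, rename_subst σ ρ t,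
        rename_subst (upSub σ) (upRen ρ) u, upSub_rename]

theorem upSub_comp (σ τ : ℕ → Tm Sg) :
    (fun n => (upSub σ n).subst (upSub τ)) = upSub (fun n => (σ n).subst τ) := by
  funext n; cases n with
  | zero => rfl
  | succ n =>
      show ((σ n).rename Nat.succ).subst (upSub τ) = ((σ n).subst τ).rename Nat.succ
      rw [subst_rename, rename_subst]
      congr 1

theorem subst_subst (σ τ : ℕ → Tm Sg) :
    ∀ t : Tm Sg, (t.subst σ).subst τ = t.subst (fun n => (σ n).subst τ)
  | .var n => rfl
  | .lam u => by
      simp only [Tm.subst, subst_subst (upSub σ) (upSub τ) u, upSub_comp]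
  | .app s t => by
      simp only [Tm.subst, subst_subst σ τ s, subst_subst σ τ t]
  | .pure t => by simp only [Tm.subst, subst_subst σ τ t]
  | .sym γ ts => by
      simp only [Tm.subst]; congr 1; funext i; exact subst_subst σ τ (ts i)
  | .letin t u => by
      simp only [Tm.subst, subst_subst σ τ t, subst_subst (upSub σ) (upSub τ) u, upSub_comp]

theorem upSub_var : upSub (Tm.var : ℕ → Tm Sg) = Tm.var := by
  funext n; cases n <;> rfl

theorem subst_var : ∀ t : Tm Sg, t.subst Tm.var = t
  | .var n => rfl
  | .lam u => by simp only [Tm.subst, upSub_var, subst_var u]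
  | .app s t => by simp only [Tm.subst, subst_var s, subst_var t]
  | .pure t => by simp only [Tm.subst, subst_var t]
  | .sym γ ts => by
      simp only [Tm.subst]; congr 1; funext i; exact subst_var (ts i)
  | .letin t u => by simp only [Tm.subst, upSub_var, subst_var t, subst_var u]

/-- `subst0` commutes with substitution. -/
theorem subst0_subst (σ : ℕ → Tm Sg) (t u : Tm Sg) :
    (Tm.subst0 t u).subst σ = Tm.subst0 (t.subst σ) (u.subst (upSub σ)) := by
  unfold Tm.subst0
  rw [subst_subst, subst_subst]
  congr 1; funext n
  cases n with
  | zero => rfl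
  | succ n =>
      show σ n = ((σ n).rename Nat.succ).subst _
      rw [subst_rename]
      conv_lhs => rw [← subst_var (σ n)]
      rfl

/-- The key commutation used for `letAssoc`. -/
theorem rename_up_subst (σ : ℕ → Tm Sg) (u : Tm Sg) :
    (u.rename (upRen Nat.succ)).subst (upSub (upSub σ)) =
      (u.subst (upSub σ)).rename (upRen Nat.succ) := by
  rw [subst_rename, rename_subst]
  congr 1; funext n
  cases n with
  | zero => rfl
  | succ n =>
      show ((σ n).rename Nat.succ).rename Nat.succ
          = (((σ n).rename Nat.succ).rename (upRen Nat.succ))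
      rw [rename_rename, rename_rename]
      rfl

/-! #### Closure of the rewrite relation under substitution -/

theorem rpo_subst {s t : Tm Sg} (σ : ℕ → Tm Sg) (h : RPO gt s t) :
    RPO gt (s.subst σ) (t.subst σ) := by
  induction h with
  | @lexArgs γ s t i hpre hlt hdom ihlt ihdom =>
      exact RPO.lexArgs (s := fun j => (s j).subst σ) (t := fun j => (t j).subst σ) i
        (fun j hj => congrArg (Tm.subst σ) (hpre j hj)) ihlt ihdom
  | @symGt γ γ' s t hγ hdom ihdom =>
      exact RPO.symGt (s := fun j => (s j).subst σ) (t := fun j => (t j).subst σ) hγ ihdom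
  | @subtermLt γ s i t h ih =>
      exact RPO.subtermLt (s := fun j => (s j).subst σ) i ih
  | @subtermEq γ s i t h =>
      exact RPO.subtermEq (s := fun j => (s j).subst σ) i (congrArg (Tm.subst σ) h)

theorem step_subst {a b : Tm Sg} (h : Step gt a b) :
    ∀ σ : ℕ → Tm Sg, Step gt (a.subst σ) (b.subst σ) := by
  induction h with
  | rpo h => exact fun σ => Step.rpo (rpo_subst σ h)
  | @beta u t =>
      intro σ
      show Step gt (Tm.app (Tm.lam (u.subst (upSub σ))) (t.subst σ)) _
      rw [subst0_subst]
      exact Step.beta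
  | @letBeta t u =>
      intro σ
      show Step gt (Tm.letin (Tm.pure (t.subst σ)) (u.subst (upSub σ))) _
      rw [subst0_subst]
      exact Step.letBeta
  | @letAssoc t₁ t₂ u =>
      intro σ
      show Step gt (Tm.letin (Tm.letin (t₁.subst σ) (t₂.subst (upSub σ))) (u.subst (upSub σ)))
        (Tm.letin (t₁.subst σ) (Tm.letin (t₂.subst (upSub σ))
          ((u.rename (upRen Nat.succ)).subst (upSub (upSub σ)))))
      rw [rename_up_subst]
      exact Step.letAssoc
  | @effAssoc e ts u he =>
      intro σ
      exact Step.effAssoc he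
  | congLam _ ih => exact fun σ => Step.congLam (ih (upSub σ))
  | congApp₁ _ ih => exact fun σ => Step.congApp₁ (ih σ)
  | congApp₂ _ ih => exact fun σ => Step.congApp₂ (ih σ)
  | congPure _ ih => exact fun σ => Step.congPure (ih σ)
  | @congSym γ ts i t' _ ih =>
      intro σ
      have h' := Step.congSym (gt := gt) (ts := fun j => (ts j).subst σ) (i := i) (ih σ)
      have : Function.update (fun j => (ts j).subst σ) i (t'.subst σ)
          = fun j => ((Function.update ts i t') j).subst σ := by
        funext j
        by_cases hj : j = i
        · subst hj; simp
        · simp [Function.update_apply, hj]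
      rw [this] at h'
      exact h'
  | congLet₁ _ ih => exact fun σ => Step.congLet₁ (ih σ)
  | congLet₂ _ ih => exact fun σ => Step.congLet₂ (ih (upSub σ))

theorem step_subst0 {u u' : Tm Sg} (t : Tm Sg) (h : Step gt u u') :
    Step gt (Tm.subst0 t u) (Tm.subst0 t u') :=
  step_subst h _

/-! #### Basic facts about `Step` -/

theorem var_no_step {n : ℕ} {r : Tm Sg} (h : Step gt (Tm.var n) r) : False := by
  cases h with
  | rpo h => cases h

/-- Steps from a `pure` term are `congPure` steps. -/
theorem pure_step_inv {t r : Tm Sg} (h : Step gt (Tm.pure t) r) :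
    ∃ t', r = Tm.pure t' ∧ Step gt t t' := by
  cases h with
  | rpo h => cases h
  | congPure h => exact ⟨_, rfl, h⟩

/-- Steps from a `lam` term are `congLam` steps. -/
theorem lam_step_inv {u r : Tm Sg} (h : Step gt (Tm.lam u) r) :
    ∃ u', r = Tm.lam u' ∧ Step gt u u' := by
  cases h with
  | rpo h => cases h
  | congLam h => exact ⟨_, rfl, h⟩

/-! #### Strong normalization helpers -/

theorem sn_of_step {t t' : Tm Sg} (h : SN gt t) (hs : Step gt t t') : SN gt t' :=
  h.inv hs

theorem sn_preimage {f : Tm Sg → Tm Sg}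
    (hf : ∀ a b, Step gt a b → Step gt (f a) (f b)) :
    ∀ {t : Tm Sg}, SN gt (f t) → SN gt t := by
  suffices H : ∀ s, SN gt s → ∀ t, s = f t → SN gt t by
    intro t h; exact H _ h t rfl
  intro s hs
  induction hs with
  | intro s _ ih =>
      intro t hst
      constructor
      intro t' ht'
      exact ih (f t') (hst ▸ hf _ _ ht') t' rfl

theorem sn_pure {t : Tm Sg} (h : SN gt t) : SN gt (Tm.pure t) := by
  induction h with
  | intro t _ ih =>
      constructor
      intro r hr
      obtain ⟨t', rfl, ht'⟩ := pure_step_inv hr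
      exact ih t' ht'

/-! #### Continuations -/

theorem plug_cong (K : Kont Sg) {a b : Tm Sg} (h : Step gt a b) :
    Step gt (K.plug a) (K.plug b) := by
  induction K generalizing a b with
  | nil => exact h
  | cons K u ih => exact ih (Step.congLet₁ h)

/-- Decomposition of a step from `K.plug t`: either the step is inside `t`,
or it is a step of the continuation alone (uniform in the hole), or it is a
head interaction between `t` and the innermost frame. -/
theorem step_plug_inv :
    ∀ (K : Kont Sg) (t r : Tm Sg), Step gt (K.plug t) r →
      (∃ t', Step gt t t' ∧ r = K.plug t') ∨
      (∃ K' : Kont Sg, r = K'.plug t ∧ ∀ s, Step gt (K.plug s) (K'.plug s)) ∨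
      (∃ (K' : Kont Sg) (u : Tm Sg), K = Kont.cons K' u ∧
        ((∃ a, t = Tm.pure a ∧ r = K'.plug (Tm.subst0 a u)) ∨
         (∃ t₁ t₂, t = Tm.letin t₁ t₂ ∧
            r = K'.plug (Tm.letin t₁ (Tm.letin t₂ (u.rename (upRen Nat.succ))))) ∨
         (∃ e ts, t = Tm.sym e ts ∧ Sg.isEffect e ∧
            r = K'.plug (Tm.sym e fun i => Tm.letin (ts i) u)))) := by
  intro K
  induction K with
  | nil =>
      intro t r h
      exact Or.inl ⟨r, h, rfl⟩
  | cons K u ih =>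
      intro t r h
      rcases ih (Tm.letin t u) r h with ⟨c', hc, rfl⟩ | ⟨K', rfl, hK⟩ | ⟨K'', u₂, rfl, hhead⟩
      · -- a step from `letin t u`
        cases hc with
        | rpo h' => cases h'
        | letBeta =>
            exact Or.inr (Or.inr ⟨K, u, rfl, Or.inl ⟨_, rfl, rfl⟩⟩)
        | letAssoc =>
            exact Or.inr (Or.inr ⟨K, u, rfl, Or.inr (Or.inl ⟨_, _, rfl, rfl⟩)⟩)
        | effAssoc he =>
            exact Or.inr (Or.inr ⟨K, u, rfl, Or.inr (Or.inr ⟨_, _, rfl, he, rfl⟩)⟩)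
        | congLet₁ h' => exact Or.inl ⟨_, h', rfl⟩
        | @congLet₂ _ _ u' h' =>
            exact Or.inr (Or.inl ⟨Kont.cons K u', rfl,
              fun s => plug_cong K (Step.congLet₂ h')⟩)
      · -- a uniform step of the tail continuation
        exact Or.inr (Or.inl ⟨Kont.cons K' u, rfl, fun s => hK (Tm.letin s u)⟩)
      · -- head interaction of `letin t u` with the innermost frame `u₂` of the tail
        rcases hhead with ⟨a, ha, _⟩ | ⟨t₁, t₂, heq, rfl⟩ | ⟨e, ts, he, _⟩
        · exact absurd ha (by simp)
        · cases heq
          exact Or.inr (Or.inl ⟨Kont.cons K'' (Tm.letin u (u₂.rename (upRen Nat.succ))), rfl,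
            fun s => plug_cong K'' Step.letAssoc⟩)
        · exact absurd he (by simp)

/-! #### Neutral terms and the CR properties -/

/-- Neutral terms: variables and applications. -/
def Neutral : Tm Sg → Prop
  | .var _ => True
  | .app _ _ => True
  | _ => False

theorem CR (T : Ty B) :
    (∀ t : Tm Sg, Red gt T t → SN gt t) ∧
    (∀ t t' : Tm Sg, Red gt T t → Step gt t t' → Red gt T t') ∧
    (∀ t : Tm Sg, Neutral t → (∀ t', Step gt t t' → Red gt T t') → Red gt T t) := by
  induction T with
  | base b =>
      refine ⟨fun t h => h, fun t t' h hs => h.inv hs, fun t _ hred => ?_⟩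
      constructor
      intro t' ht'
      exact hred t' ht'
  | arrow S T ihS ihT =>
      obtain ⟨cr1S, cr2S, cr3S⟩ := ihS
      obtain ⟨cr1T, cr2T, cr3T⟩ := ihT
      refine ⟨?_, ?_, ?_⟩
      · -- CR1
        intro s hs
        have hvar : Red gt S (Tm.var 0) :=
          cr3S (Tm.var 0) trivial (fun t' ht' => absurd ht' var_no_step)
        have : SN gt (Tm.app s (Tm.var 0)) := cr1T _ (hs _ hvar)
        exact sn_preimage (f := fun a => Tm.app a (Tm.var 0))
          (fun a b hab => Step.congApp₁ hab) this
      · -- CR2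
        intro s s' hs hss' t ht
        exact cr2T _ _ (hs t ht) (Step.congApp₁ hss')
      · -- CR3
        intro t hneut hred s hsRed
        have hsSN : SN gt s := cr1S _ hsRed
        revert hsRed
        induction hsSN with
        | intro s hacc ih =>
            intro hsRed
            refine cr3T (Tm.app t s) trivial ?_
            intro r hr
            cases hr with
            | rpo h => cases h
            | beta => exact hneut.elim
            | congApp₁ h' => exact hred _ h' s hsRed
            | congApp₂ h' => exact ih _ h' (cr2S _ _ hsRed h')
  | eff T ihT =>
      obtain ⟨cr1T, cr2T, cr3T⟩ := ihT
      have hvar : Red gt T (Tm.var 0) :=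
        cr3T (Tm.var 0) trivial (fun t' ht' => absurd ht' var_no_step)
      refine ⟨?_, ?_, ?_⟩
      · -- CR1
        intro t ht
        have : SN gt (Kont.nil.plug t) :=
          ht Kont.nil (fun u hu => sn_pure (cr1T u hu))
        exact this
      · -- CR2
        intro t t' ht hss' K hK
        exact (ht K hK).inv (plug_cong K hss')
      · -- CR3
        intro t hneut hred K hK
        have base : SN gt (K.plug (Tm.pure (Tm.var 0))) := hK _ hvar
        have main : ∀ s, SN gt s → ∀ K : Kont Sg,
            s = K.plug (Tm.pure (Tm.var 0)) →
            (∀ u, Red gt T u → SN gt (K.plug (Tm.pure u))) →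
            SN gt (K.plug t) := by
          intro s hs
          induction hs with
          | intro s _ ih =>
              intro K hseq hK
              subst hseq
              constructor
              intro r hr
              rcases step_plug_inv K t r hr with ⟨t', ht', rfl⟩ | ⟨K', rfl, hstep⟩
                | ⟨K', u, rfl, hhead⟩
              · exact hred t' ht' K hK
              · exact ih _ (hstep (Tm.pure (Tm.var 0))) K' rfl
                  (fun u hu => (hK u hu).inv (hstep (Tm.pure u)))
              · rcases hhead with ⟨a, ha, _⟩ | ⟨t₁, t₂, ha, _⟩ | ⟨e, ts, ha, _⟩ <;>
                  (subst ha; exact absurd hneut (by simp [Neutral]))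
        exact main _ base K rfl hK

end RedLamAux
/-- If `Red_T(u{t/x})` holds for every term `t` with `Red_S(t)`,
then `Red_{S→T}(λx. u)`. -/
theorem red_lam {Sym B : Type} {Sg : Signature Sym B} (gt : Sym → Sym → Prop)
    (hwf : WellFounded (fun a b : Sym => gt b a)) (htrans : Transitive gt)
    (S T : Ty B) (u : Tm Sg)
    (h : ∀ t : Tm Sg, Red gt S t → Red gt T (Tm.subst0 t u)) :
    Red gt (Ty.arrow S T) (Tm.lam u) := by
  obtain ⟨cr1S, cr2S, cr3S⟩ := RedLamAux.CR (gt := gt) (Sg := Sg) S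
  obtain ⟨cr1T, cr2T, cr3T⟩ := RedLamAux.CR (gt := gt) (Sg := Sg) T
  intro t ht
  have hsnt : SN gt t := cr1S t ht
  have hsnu : SN gt u := by
    have : SN gt (Tm.subst0 t u) := cr1T _ (h t ht)
    exact RedLamAux.sn_preimage (f := fun a => Tm.subst0 t a)
      (fun a b hab => RedLamAux.step_subst hab _) this
  have main : ∀ u : Tm Sg, SN gt u →
      (∀ t', Red gt S t' → Red gt T (Tm.subst0 t' u)) →
      ∀ t : Tm Sg, SN gt t → Red gt S t → Red gt T (Tm.app (Tm.lam u) t) := by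
    intro u hu
    induction hu with
    | intro u huacc ihu =>
        intro hsub t htsn
        induction htsn with
        | intro t htacc iht =>
            intro ht
            refine cr3T (Tm.app (Tm.lam u) t) trivial ?_
            intro r hr
            cases hr with
            | rpo h' => cases h'
            | beta => exact hsub t ht
            | congApp₁ h' =>
                obtain ⟨u', rfl, hu'⟩ := RedLamAux.lam_step_inv h'
                exact ihu u' hu'
                  (fun t' ht' => cr2T _ _ (hsub t' ht') (RedLamAux.step_subst hu' _))
                  t (Acc.intro t htacc) ht
            | congApp₂ h' => exact iht _ h' (cr2S _ _ ht h')
  exact main u hsnu h t hsnt ht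
end

section
/- If Red_{E(S)}(s), and u is a term such that Red_{E(T)}(u{s'/x}) for every s' with Red_S(s'), then Red_{E(T)}(let x ⇐ s in u). -/
/-!
Write `K∘F` for the continuation `K` extended by the frame `F = let x ⇐ [] in u`, so that
`K@(let x ⇐ s in u) = (K∘F)@s`. By `Red_{E(S)}(s)` it suffices that `K∘F ∈ Red_S^⊤`, i.e. that
`K@(let x ⇐ pure t in u)` is strongly normalizing for every reducible `t`. Since `t` is SN
(CR1) and `K@u{t/x}` is SN by hypothesis, this follows by induction on `t`, on `K@u{t/x}`
and on the length of `K`: a reduct either reduces `t` (reducibility is closed under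
reduction, CR2), reduces `u` or `K` (a reduct of `K@u{t/x}`), is `K@u{t/x}` itself (let-β),
or moves the innermost frame of `K` into `u` by let-assoc (same `K@u{t/x}`, shorter `K`).
-/

namespace Tm

variable {Sym B : Type} {Sg : Signature Sym B}

theorem upRen_comp (ρ ρ' : ℕ → ℕ) :
    (fun n => upRen ρ (upRen ρ' n)) = upRen (fun n => ρ (ρ' n)) := by
  funext n; cases n <;> rfl

theorem rename_rename (ρ ρ' : ℕ → ℕ) (t : Tm Sg) :
    (t.rename ρ').rename ρ = t.rename (fun n => ρ (ρ' n)) := by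
  induction t generalizing ρ ρ' with
  | var n => rfl
  | lam u ih => simp only [rename, ih, upRen_comp]
  | app s t ihs iht => simp only [rename, ihs, iht]
  | pure t ih => simp only [rename, ih]
  | sym γ ts ih => simp only [rename, ih]
  | letin t u iht ihu => simp only [rename, iht, ihu, upRen_comp]

theorem upSub_comp_upRen (σ : ℕ → Tm Sg) (ρ : ℕ → ℕ) :
    (fun n => upSub σ (upRen ρ n)) = upSub (fun n => σ (ρ n)) := by
  funext n; cases n <;> rfl

theorem subst_rename (σ : ℕ → Tm Sg) (ρ : ℕ → ℕ) (t : Tm Sg) :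
    (t.rename ρ).subst σ = t.subst (fun n => σ (ρ n)) := by
  induction t generalizing σ ρ with
  | var n => rfl
  | lam u ih => simp only [rename, subst, ih, upSub_comp_upRen]
  | app s t ihs iht => simp only [rename, subst, ihs, iht]
  | pure t ih => simp only [rename, subst, ih]
  | sym γ ts ih => simp only [rename, subst, ih]
  | letin t u iht ihu => simp only [rename, subst, iht, ihu, upSub_comp_upRen]

theorem upSub_rename (ρ : ℕ → ℕ) (σ : ℕ → Tm Sg) :
    (fun n => (upSub σ n).rename (upRen ρ)) = upSub (fun n => (σ n).rename ρ) := by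
  funext n; cases n with
  | zero => rfl
  | succ n => simp only [upSub, rename_rename]; rfl

theorem rename_subst (ρ : ℕ → ℕ) (σ : ℕ → Tm Sg) (t : Tm Sg) :
    (t.subst σ).rename ρ = t.subst (fun n => (σ n).rename ρ) := by
  induction t generalizing σ ρ with
  | var n => rfl
  | lam u ih => simp only [subst, rename, ih, upSub_rename]
  | app s t ihs iht => simp only [subst, rename, ihs, iht]
  | pure t ih => simp only [subst, rename, ih]
  | sym γ ts ih => simp only [subst, rename, ih]
  | letin t u iht ihu => simp only [subst, rename, iht, ihu, upSub_rename]

theorem upSub_subst (σ τ : ℕ → Tm Sg) :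
    (fun n => (upSub τ n).subst (upSub σ)) = upSub (fun n => (τ n).subst σ) := by
  funext n; cases n with
  | zero => rfl
  | succ n => simp only [upSub, subst_rename, rename_subst]

theorem subst_subst (σ τ : ℕ → Tm Sg) (t : Tm Sg) :
    (t.subst τ).subst σ = t.subst (fun n => (τ n).subst σ) := by
  induction t generalizing σ τ with
  | var n => rfl
  | lam u ih => simp only [subst, ih, upSub_subst]
  | app s t ihs iht => simp only [subst, ihs, iht]
  | pure t ih => simp only [subst, ih]
  | sym γ ts ih => simp only [subst, ih]
  | letin t u iht ihu => simp only [subst, iht, ihu, upSub_subst]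

theorem upSub_var_id : upSub (.var : ℕ → Tm Sg) = .var := by
  funext n; cases n <;> rfl

theorem subst_var (t : Tm Sg) : t.subst .var = t := by
  induction t with
  | var n => rfl
  | lam u ih => simp only [subst, upSub_var_id, ih]
  | app s t ihs iht => simp only [subst, ihs, iht]
  | pure t ih => simp only [subst, ih]
  | sym γ ts ih => simp only [subst, ih]
  | letin t u iht ihu => simp only [subst, upSub_var_id, iht, ihu]

theorem subst0_subst (σ : ℕ → Tm Sg) (t u : Tm Sg) :
    (subst0 t u).subst σ = subst0 (t.subst σ) (u.subst (upSub σ)) := by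
  simp only [subst0, subst_subst]
  congr 1; funext n
  cases n with
  | zero => rfl
  | succ n => simp only [upSub, subst_rename]; exact (subst_var _).symm

theorem rename_upRen_succ_subst (σ : ℕ → Tm Sg) (u : Tm Sg) :
    (u.rename (upRen Nat.succ)).subst (upSub (upSub σ)) =
      (u.subst (upSub σ)).rename (upRen Nat.succ) := by
  simp only [subst_rename, rename_subst]
  congr 1; funext n
  cases n with
  | zero => rfl
  | succ n => simp only [upRen, upSub, rename_rename]

theorem subst0_letin_rename_upRen_succ (t u v : Tm Sg) :
    subst0 t (.letin u (v.rename (upRen Nat.succ))) = .letin (subst0 t u) v := by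
  have hid : (fun n => upSub (fun n => match n with | 0 => t | n + 1 => .var n)
      (upRen Nat.succ n)) = (.var : ℕ → Tm Sg) := by
    funext n; cases n <;> rfl
  simp only [subst0, subst, subst_rename, hid, subst_var]

end Tm

section Steps

variable {Sym B : Type} {Sg : Signature Sym B} {gt : Sym → Sym → Prop}

theorem RPO.subst {s t : Tm Sg} (h : RPO gt s t) (σ : ℕ → Tm Sg) :
    RPO gt (s.subst σ) (t.subst σ) := by
  induction h with
  | lexArgs i hpre _ _ ihlt ihdom =>
      exact RPO.lexArgs i (fun j hj => congrArg (Tm.subst σ) (hpre j hj)) ihlt ihdom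
  | symGt hγ _ ihdom => exact RPO.symGt hγ ihdom
  | subtermLt i _ ih => exact RPO.subtermLt i ih
  | subtermEq i h => exact RPO.subtermEq i (congrArg (Tm.subst σ) h)

theorem RPO.exists_sym_eq {s t : Tm Sg} (h : RPO gt s t) : ∃ γ ss, s = Tm.sym γ ss := by
  cases h <;> exact ⟨_, _, rfl⟩

theorem Step.subst {a b : Tm Sg} (h : Step gt a b) (σ : ℕ → Tm Sg) :
    Step gt (a.subst σ) (b.subst σ) := by
  induction h generalizing σ with
  | rpo h => exact .rpo (h.subst σ)
  | beta => rw [Tm.subst0_subst]; exact .beta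
  | letBeta => rw [Tm.subst0_subst]; exact .letBeta
  | letAssoc => simp only [Tm.subst, Tm.rename_upRen_succ_subst]; exact .letAssoc
  | effAssoc he => exact .effAssoc he
  | congLam _ ih => exact .congLam (ih _)
  | congApp₁ _ ih => exact .congApp₁ (ih _)
  | congApp₂ _ ih => exact .congApp₂ (ih _)
  | congPure _ ih => exact .congPure (ih _)
  | congSym _ ih =>
      simp only [Tm.subst, ← Function.comp_def (Tm.subst σ), Function.comp_update]
      exact .congSym (ih _)
  | congLet₁ _ ih => exact .congLet₁ (ih _)
  | congLet₂ _ ih => exact .congLet₂ (ih _)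

theorem Step.subst0 {u u' : Tm Sg} (t : Tm Sg) (h : Step gt u u') :
    Step gt (Tm.subst0 t u) (Tm.subst0 t u') :=
  h.subst _

theorem Step.plug {a b : Tm Sg} (K : Kont Sg) (h : Step gt a b) :
    Step gt (K.plug a) (K.plug b) := by
  induction K generalizing a b with
  | nil => exact h
  | cons K u ih => exact ih (.congLet₁ h)

theorem not_step_var {n : ℕ} {w : Tm Sg} : ¬ Step gt (.var n) w := by
  rintro (h | _)
  obtain ⟨_, _, ⟨⟩⟩ := h.exists_sym_eq

theorem exists_of_step_pure {t w : Tm Sg} (h : Step gt (.pure t) w) :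
    ∃ t', Step gt t t' ∧ w = .pure t' := by
  rcases h with h | _ | _ | _ | _ | _ | _ | _ | h
  · obtain ⟨_, _, ⟨⟩⟩ := h.exists_sym_eq
  · exact ⟨_, h, rfl⟩

theorem SN.of_map {f : Tm Sg → Tm Sg} (hf : ∀ {x y}, Step gt x y → Step gt (f x) (f y))
    {a : Tm Sg} (h : SN gt (f a)) : SN gt a :=
  Subrelation.accessible (fun h => hf h) (InvImage.accessible f h)

theorem SN.pure {t : Tm Sg} (h : SN gt t) : SN gt (Tm.pure t) := by
  induction h with
  | intro t _ ih =>
      refine Acc.intro _ fun w hw => ?_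
      obtain ⟨t', ht', rfl⟩ := exists_of_step_pure hw
      exact ih t' ht'

end Steps

section Reducibility

variable {Sym B : Type} {Sg : Signature Sym B} {gt : Sym → Sym → Prop}

/-- A step of `K@h` either reduces `h`, reduces `K` independently of `h`, or is a let-β,
let-assoc or eff-assoc redex formed by `h` and the innermost frame of `K`. -/
theorem Kont.step_plug_cases {K : Kont Sg} {h w : Tm Sg} (hs : Step gt (K.plug h) w) :
    (∃ h', Step gt h h' ∧ w = K.plug h') ∨
    (∃ K' : Kont Sg, (∀ r, Step gt (K.plug r) (K'.plug r)) ∧ w = K'.plug h) ∨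
    (∃ K₀ v, K = .cons K₀ v ∧
      ((∃ t, h = .pure t ∧ w = K₀.plug (Tm.subst0 t v)) ∨
       (∃ t₁ t₂, h = .letin t₁ t₂ ∧
          w = K₀.plug (.letin t₁ (.letin t₂ (v.rename (Tm.upRen Nat.succ))))) ∨
       (∃ e ts, Sg.isEffect e ∧ h = .sym e ts ∧
          w = K₀.plug (.sym e fun i => .letin (ts i) v)))) := by
  induction K generalizing h w with
  | nil => exact .inl ⟨w, hs, rfl⟩
  | cons K v ih =>
      rcases ih hs with ⟨g, hg, rfl⟩ | ⟨K', hK', rfl⟩ | ⟨K₀, v₀, rfl, hroot⟩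
      · cases hg with
        | rpo hr => obtain ⟨_, _, ⟨⟩⟩ := hr.exists_sym_eq
        | letBeta => exact .inr <| .inr ⟨K, v, rfl, .inl ⟨_, rfl, rfl⟩⟩
        | letAssoc => exact .inr <| .inr ⟨K, v, rfl, .inr <| .inl ⟨_, _, rfl, rfl⟩⟩
        | effAssoc he => exact .inr <| .inr ⟨K, v, rfl, .inr <| .inr ⟨_, _, he, rfl, rfl⟩⟩
        | congLet₁ hst => exact .inl ⟨_, hst, rfl⟩
        | congLet₂ hst => exact .inr <| .inl ⟨.cons K _, fun _ => Step.plug K (.congLet₂ hst), rfl⟩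
      · exact .inr <| .inl ⟨.cons K' v, fun r => hK' (.letin r v), rfl⟩
      · rcases hroot with ⟨_, ⟨⟩, _⟩ | ⟨_, _, ⟨⟩, hw⟩ | ⟨_, _, _, ⟨⟩, _⟩
        exact .inr <| .inl ⟨.cons K₀ (.letin v (v₀.rename (Tm.upRen Nat.succ))),
          fun _ => Step.plug K₀ .letAssoc, hw⟩

theorem Red.step {T : Ty B} {t t' : Tm Sg} (h : Red gt T t) (hs : Step gt t t') :
    Red gt T t' := by
  induction T generalizing t t' with
  | base b => exact h.inv hs
  | arrow S T _ ihT => exact fun a ha => ihT (h a ha) (.congApp₁ hs)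
  | eff T _ => exact fun K hK => (h K hK).inv (Step.plug K hs)

inductive Neutral_s10 : Tm Sg → Prop where
  | var (n : ℕ) : Neutral_s10 (.var n)
  | app (s t : Tm Sg) : Neutral_s10 (.app s t)

/-- The seed `z` makes `K@pure z` SN, which is the measure for the reductions of `K`. -/
theorem red_eff_of_neutral {T : Ty B} {t z : Tm Sg} (hne : Neutral_s10 t)
    (hred : ∀ t', Step gt t t' → Red gt (.eff T) t') (hz : Red gt T z) :
    Red gt (.eff T) t := by
  intro K hK
  generalize hM : K.plug (.pure z) = M
  have hMsn : SN gt M := hM ▸ hK z hz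
  induction hMsn generalizing K with
  | intro M _ ihM =>
      subst hM
      refine Acc.intro _ fun w hw => ?_
      rcases Kont.step_plug_cases hw with ⟨t', hst, rfl⟩ | ⟨K', hK', rfl⟩ | ⟨_, _, _, hroot⟩
      · exact hred t' hst K hK
      · exact ihM _ (hK' _) K' (fun u hu => (hK u hu).inv (hK' _)) rfl
      · rcases hroot with ⟨_, rfl, _⟩ | ⟨_, _, rfl, _⟩ | ⟨_, _, _, rfl, _⟩ <;> cases hne

theorem sn_of_red_and_red_of_neutral (T : Ty B) :
    (∀ t : Tm Sg, Red gt T t → SN gt t) ∧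
    (∀ t : Tm Sg, Neutral_s10 t → (∀ t', Step gt t t' → Red gt T t') → Red gt T t) := by
  induction T with
  | base b => exact ⟨fun _ ht => ht, fun _ _ hred => Acc.intro _ hred⟩
  | arrow S T ihS ihT =>
      have red_var (n : ℕ) : Red gt S (.var n : Tm Sg) :=
        ihS.2 _ (.var n) fun _ h => (not_step_var h).elim
      refine ⟨fun t ht => SN.of_map .congApp₁ (ihT.1 _ (ht _ (red_var 0))), ?_⟩
      intro t hne hred a ha
      induction ihS.1 a ha with
      | intro a _ iha =>
          refine ihT.2 _ (.app t a) fun w hw => ?_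
          cases hw with
          | rpo hr => obtain ⟨_, _, ⟨⟩⟩ := hr.exists_sym_eq
          | beta => cases hne
          | congApp₁ hst => exact hred _ hst a ha
          | congApp₂ hst => exact iha _ hst (ha.step hst)
  | eff T ihT =>
      refine ⟨fun t ht => ht .nil fun u hu => (ihT.1 u hu).pure, fun t hne hred => ?_⟩
      exact red_eff_of_neutral hne hred (ihT.2 _ (.var 0) fun _ h => (not_step_var h).elim)

theorem Red.sn {T : Ty B} {t : Tm Sg} (h : Red gt T t) : SN gt t :=
  (sn_of_red_and_red_of_neutral T).1 t h

end Reducibility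

section LetPure

variable {Sym B : Type} {Sg : Signature Sym B} {gt : Sym → Sym → Prop}

theorem sn_plug_letin_pure {P : Tm Sg → Prop} (hP : ∀ {t t'}, P t → Step gt t t' → P t')
    {t : Tm Sg} (ht : SN gt t) (hPt : P t) {K : Kont Sg} {u : Tm Sg}
    (hK : ∀ t', P t' → SN gt (K.plug (Tm.subst0 t' u))) :
    SN gt (K.plug (.letin (.pure t) u)) := by
  induction ht generalizing K u with
  | intro t _ iht =>
    generalize hM : K.plug (Tm.subst0 t u) = M
    have hMsn : SN gt M := hM ▸ hK t hPt
    induction hMsn generalizing K u with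
    | intro M _ ihM =>
      induction hlen : K.len using Nat.strong_induction_on generalizing K u with
      | _ n ihlen =>
        subst hM hlen
        refine Acc.intro _ fun w hw => ?_
        rcases Kont.step_plug_cases hw with ⟨g, hg, rfl⟩ | ⟨K', hK', rfl⟩ | ⟨K₀, v, rfl, hroot⟩
        · cases hg with
          | rpo hr => obtain ⟨_, _, ⟨⟩⟩ := hr.exists_sym_eq
          | letBeta => exact hK t hPt
          | congLet₁ hst =>
            obtain ⟨t', ht', rfl⟩ := exists_of_step_pure hst
            exact iht t' ht' (hP hPt ht') hK
          | congLet₂ hst =>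
            have hstep (t' : Tm Sg) := Step.plug K (hst.subst0 t')
            exact ihM _ (hstep t) (fun t' ht' => (hK t' ht').inv (hstep t')) rfl
        · exact ihM _ (hK' _) (fun t' ht' => (hK t' ht').inv (hK' _)) rfl
        · rcases hroot with ⟨_, ⟨⟩, _⟩ | ⟨_, _, ⟨⟩, rfl⟩ | ⟨_, _, _, ⟨⟩, _⟩
          have hassoc := Tm.subst0_letin_rename_upRen_succ (u := u) (v := v)
          exact ihlen K₀.len (Nat.lt_succ_self _) (fun t' ht' => hassoc t' ▸ hK t' ht')
            (hassoc t ▸ rfl) rfl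

end LetPure

theorem red_let_general {Sym B : Type} {Sg : Signature Sym B} (gt : Sym → Sym → Prop)
    (S T : Ty B) (s u : Tm Sg)
    (hs : Red gt (Ty.eff S) s)
    (hu : ∀ s' : Tm Sg, Red gt S s' → Red gt (Ty.eff T) (Tm.subst0 s' u)) :
    Red gt (Ty.eff T) (Tm.letin s u) := by
  intro K hK
  have hK_let_top : RedTop gt S (.cons K u) := fun t ht =>
    sn_plug_letin_pure Red.step ht.sn ht fun t' ht' => hu t' ht' K hK
  exact hs (.cons K u) hK_let_top

/-- If `Red_{E(S)}(s)`, and `u` is such that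
`Red_{E(T)}(u{s'/x})` for every `s'` with `Red_S(s')`, then
`Red_{E(T)}(let x ⇐ s in u)`. -/
theorem red_let {Sym B : Type} {Sg : Signature Sym B} (gt : Sym → Sym → Prop)
    (hwf : WellFounded (fun a b : Sym => gt b a)) (htrans : Transitive gt)
    (S T : Ty B) (s u : Tm Sg)
    (hs : Red gt (Ty.eff S) s)
    (hu : ∀ s' : Tm Sg, Red gt S s' → Red gt (Ty.eff T) (Tm.subst0 s' u)) :
    Red gt (Ty.eff T) (Tm.letin s u) :=
  red_let_general gt S T s u hs hu
end

section
/- (RPO step) Let C be a context (a continuation K, an application context [] t, or the empty context []), and let s = γ(s1,...,sn) with s ≻ t, where C[si] is SN for each i. Suppose additionally (the 'lemma hypothesis') that for every symbol γ' and term vector t⃗ such that the pair (γ, s⃗) is greater than (γ', t⃗) in the lexicographic ordering given by >_Σ on symbols followed by ≻̇_lex on argument vectors, the term C[γ'(t1,...,tm)] is SN. Then C[t] is SN. -/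
/-- Contexts `C ::= K | [] t | []`. -/
inductive Ctx {Sym B : Type} (Sg : Signature Sym B) : Type where
  | kont : Kont Sg → Ctx Sg
  | appArg : Tm Sg → Ctx Sg
  | empty : Ctx Sg

/-- `C[s]`: filling a context with a term (`K@s`, `s t`, or `s`). -/
def Ctx.fill {Sym B : Type} {Sg : Signature Sym B} : Ctx Sg → Tm Sg → Tm Sg
  | .kont K, s => K.plug s
  | .appArg t, s => Tm.app s t
  | .empty, s => s

lemma step_plug {Sym B : Type} {Sg : Signature Sym B} {gt : Sym → Sym → Prop}
    {s t : Tm Sg} (K : Kont Sg) (h : Step gt s t) :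
    Step gt (K.plug s) (K.plug t) := by
  induction K generalizing s t with
  | nil => exact h
  | cons K u ih => exact ih (Step.congLet₁ h)

lemma step_fill {Sym B : Type} {Sg : Signature Sym B} {gt : Sym → Sym → Prop}
    {s t : Tm Sg} (C : Ctx Sg) (h : Step gt s t) :
    Step gt (C.fill s) (C.fill t) := by
  cases C with
  | kont K => exact step_plug K h
  | appArg u => exact Step.congApp₁ h
  | empty => exact h

/-- RPO step: Let `C` be a context and `s = γ(s₁,…,sₙ)` with
`s ≻ t`, where each `C[sᵢ]` is SN.  Suppose (the "lemma hypothesis") that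
`C[γ'(t₁,…,tₘ)]` is SN whenever `(γ, s⃗)` is greater than `(γ', t⃗)` in the
lexicographic ordering given by `>_Σ` followed by `≻̇_lex`.  Then `C[t]` is SN. -/
theorem rpo_step {Sym B : Type} {Sg : Signature Sym B} (gt : Sym → Sym → Prop)
    (hwf : WellFounded (fun a b : Sym => gt b a)) (htrans : Transitive gt)
    (C : Ctx Sg) (γ : Sym) (sv : Fin (Sg.arity γ) → Tm Sg) (t : Tm Sg)
    (hrpo : RPO gt (Tm.sym γ sv) t)
    (hargs : ∀ i, SN gt (C.fill (sv i)))
    (hgtSym : ∀ (γ' : Sym) (tv : Fin (Sg.arity γ') → Tm Sg),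
      gt γ γ' → SN gt (C.fill (Tm.sym γ' tv)))
    (hlex : ∀ tv : Fin (Sg.arity γ) → Tm Sg,
      (∃ i : Fin (Sg.arity γ), (∀ j, j < i → sv j = tv j) ∧ Step gt (sv i) (tv i)) →
      SN gt (C.fill (Tm.sym γ tv))) :
    SN gt (C.fill t) := by
  cases hrpo with
  | lexArgs i hpre hlt hdom =>
      exact hlex _ ⟨i, hpre, Step.rpo hlt⟩
  | symGt hγ hdom => exact hgtSym _ _ hγ
  | subtermLt i h => exact (hargs i).inv (step_fill C (Step.rpo h))
  | subtermEq i h => exact h ▸ hargs i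
end

section
/- The global-state rewrite system is strongly normalizing: for terms built from leaves, unary constructors assign_i (one for each value i of a finite value type with n elements), and the n-ary constructor get, the rewrite relation generated by the rules (a) assign_i(get(t1,...,tn)) ⇝ assign_i(t_i), (b) assign_i(assign_j(s)) ⇝ assign_j(s), and (c) get(t1,...,t_i,...,tn) ⇝ get(t1,...,s_i,...,tn) whenever t_i = get(s1,...,sn), closed under application in any subterm position, admits no infinite rewrite sequence. -/
/-- Terms of the global-state effect system over a finite value type `V` (with
leaves drawn from a type `α`): leaves, unary constructors `assign i` (one for
each value `i : V`), and the `|V|`-ary constructor `get`, whose arguments are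
indexed by the values of `V`. -/
inductive GSTm (α V : Type) : Type where
  | leaf : α → GSTm α V
  | assign : V → GSTm α V → GSTm α V
  | get : (V → GSTm α V) → GSTm α V

/-- The one-step rewrite relation: the compatible closure (closure under all
subterm contexts) of the rules
(a) `assignᵢ(get(t₁,…,tₙ)) ⇝ assignᵢ(tᵢ)`,
(b) `assignᵢ(assignⱼ(s)) ⇝ assignⱼ(s)`, and
(c) `get(t₁,…,tᵢ,…,tₙ) ⇝ get(t₁,…,sᵢ,…,tₙ)` whenever `tᵢ = get(s₁,…,sₙ)`. -/
inductive GSStep {α V : Type} [DecidableEq V] : GSTm α V → GSTm α V → Prop where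
  | assignGet {i : V} {t : V → GSTm α V} :
      GSStep (.assign i (.get t)) (.assign i (t i))
  | assignAssign {i j : V} {s : GSTm α V} :
      GSStep (.assign i (.assign j s)) (.assign j s)
  | getGet {t : V → GSTm α V} {i : V} {s : V → GSTm α V} :
      t i = .get s → GSStep (.get t) (.get (Function.update t i (s i)))
  | congAssign {i : V} {s s' : GSTm α V} :
      GSStep s s' → GSStep (.assign i s) (.assign i s')
  | congGet {t : V → GSTm α V} {i : V} {t' : GSTm α V} :
      GSStep (t i) t' → GSStep (.get t) (.get (Function.update t i t'))

/-- Size measure on global-state terms. -/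
def GSTm.size {α V : Type} [Fintype V] : GSTm α V → ℕ
  | .leaf _ => 1
  | .assign _ s => s.size + 1
  | .get t => 1 + ∑ i, (t i).size

lemma gsTm_size_le {α V : Type} [Fintype V] (t : V → GSTm α V) (i : V) :
    (t i).size ≤ ∑ j, (t j).size :=
  Finset.single_le_sum (f := fun j => (t j).size) (fun _ _ => Nat.zero_le _)
    (Finset.mem_univ i)

lemma gsTm_size_update {α V : Type} [DecidableEq V] [Fintype V]
    (t : V → GSTm α V) (i : V) (x : GSTm α V) (h : x.size < (t i).size) :
    ∑ j, (Function.update t i x j).size < ∑ j, (t j).size := by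
  have key : (fun j => (Function.update t i x j).size)
      = Function.update (fun j => (t j).size) i x.size := by
    funext j
    by_cases hji : j = i
    · subst hji; simp
    · simp [Function.update_of_ne hji]
  calc ∑ j, (Function.update t i x j).size
      = x.size + ∑ j ∈ Finset.univ \ {i}, (t j).size := by
        rw [show (∑ j, (Function.update t i x j).size)
            = ∑ j, Function.update (fun j => (t j).size) i x.size j from by
          rw [key], Finset.sum_update_of_mem (Finset.mem_univ i)]
    _ < (t i).size + ∑ j ∈ Finset.univ \ {i}, (t j).size :=
        Nat.add_lt_add_right h _
    _ = ∑ j, (t j).size := by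
        rw [← Finset.sum_update_of_mem (Finset.mem_univ i)
          (f := fun j => (t j).size) (b := (t i).size)]
        congr 1
        funext j
        by_cases hji : j = i
        · subst hji; simp
        · simp [Function.update_of_ne hji]

lemma gsStep_size_lt {α V : Type} [DecidableEq V] [Fintype V]
    {a b : GSTm α V} (h : GSStep a b) : b.size < a.size := by
  induction h with
  | @assignGet i t =>
      simp only [GSTm.size]
      have := gsTm_size_le t i
      omega
  | assignAssign =>
      simp only [GSTm.size]; omega
  | @getGet t i s hs =>
      simp only [GSTm.size]
      have h1 : (s i).size < (t i).size := by
        rw [hs]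
        simp only [GSTm.size]
        have := gsTm_size_le s i
        omega
      have := gsTm_size_update t i (s i) h1
      omega
  | congAssign _ ih =>
      simp only [GSTm.size]; omega
  | @congGet t i t' _ ih =>
      simp only [GSTm.size]
      have := gsTm_size_update t i t' ih
      omega

/-- The global-state rewrite system over a finite, nonempty value
type is strongly normalizing: the converse of the rewrite relation is
well-founded, i.e. there is no infinite rewrite sequence. -/
theorem gsStep_strongly_normalizing (α V : Type) [DecidableEq V] [Fintype V]
    [Nonempty V] :
    WellFounded (fun a b : GSTm α V => GSStep b a) := by
  have : Subrelation (fun a b : GSTm α V => GSStep b a)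
      (InvImage Nat.lt GSTm.size) := fun h => gsStep_size_lt h
  exact Subrelation.wf this (InvImage.wf _ Nat.lt_wfRel.wf)
end

section
/- The request-retry rewrite system is strongly normalizing: for terms built from leaves, nullary zero, unary succ, binary retry, and (n+1)-ary request, the rewrite relation generated by the rules (a) retry(zero(), request(t, s1,...,sn)) ⇝ t and (b) retry(succ(u), request(t, s1,...,sn)) ⇝ request(retry(u, request(t, s1,...,sn)), s1,...,sn), closed under application in any subterm position, admits no infinite rewrite sequence. -/
/-- Terms of the request-retry effect system (for a fixed `n`, with leaves drawn
from a type `α`): leaves, nullary `zero`, unary `succ`, binary `retry`, and the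
`(n+1)`-ary constructor `request` (one distinguished failure argument plus `n`
result arguments). -/
inductive RRTm (α : Type) (n : ℕ) : Type where
  | leaf : α → RRTm α n
  | zero : RRTm α n
  | succ : RRTm α n → RRTm α n
  | retry : RRTm α n → RRTm α n → RRTm α n
  | request : RRTm α n → (Fin n → RRTm α n) → RRTm α n

/-- The one-step rewrite relation: the compatible closure (closure under all
subterm contexts) of the rules
(a) `retry(zero(), request(t, s₁,…,sₙ)) ⇝ t` and
(b) `retry(succ(u), request(t, s₁,…,sₙ)) ⇝
       request(retry(u, request(t, s₁,…,sₙ)), s₁,…,sₙ)`. -/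
inductive RRStep {α : Type} {n : ℕ} : RRTm α n → RRTm α n → Prop where
  | retryZero {t : RRTm α n} {s : Fin n → RRTm α n} :
      RRStep (.retry .zero (.request t s)) t
  | retrySucc {u t : RRTm α n} {s : Fin n → RRTm α n} :
      RRStep (.retry (.succ u) (.request t s))
        (.request (.retry u (.request t s)) s)
  | congSucc {t t' : RRTm α n} :
      RRStep t t' → RRStep (.succ t) (.succ t')
  | congRetry₁ {u u' t : RRTm α n} :
      RRStep u u' → RRStep (.retry u t) (.retry u' t)
  | congRetry₂ {u t t' : RRTm α n} :
      RRStep t t' → RRStep (.retry u t) (.retry u t')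
  | congRequest₀ {t t' : RRTm α n} {s : Fin n → RRTm α n} :
      RRStep t t' → RRStep (.request t s) (.request t' s)
  | congRequestArg {t : RRTm α n} {s : Fin n → RRTm α n} {i : Fin n} {s' : RRTm α n} :
      RRStep (s i) s' → RRStep (.request t s) (.request t (Function.update s i s'))

def msr {α : Type} {n : ℕ} : RRTm α n → ℕ
  | .leaf _ => 1
  | .zero => 1
  | .succ u => msr u + 1
  | .retry u t => (msr u + 1) * msr t
  | .request t s => msr t + (∑ i, msr (s i)) + 1

theorem one_le_msr {α : Type} {n : ℕ} (t : RRTm α n) : 1 ≤ msr t := by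
  induction t with
  | leaf a => simp [msr]
  | zero => simp [msr]
  | succ u ih => simp [msr]
  | retry u t ihu iht => simpa [msr] using Nat.one_le_iff_ne_zero.mpr (by positivity)
  | request t s ih => simp [msr]

theorem msr_decrease {α : Type} {n : ℕ} {a b : RRTm α n}
    (h : @RRStep α n a b) : msr b < msr a := by
  induction h with
  | @retryZero t s =>
      simp only [msr]
      have := one_le_msr t
      nlinarith [Finset.sum_nonneg (fun i (_ : i ∈ Finset.univ) => Nat.zero_le (msr (s i)))]
  | @retrySucc u t s =>
      simp only [msr]
      have := one_le_msr t
      nlinarith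
  | congSucc h ih => simp only [msr]; omega
  | @congRetry₁ u u' t h ih =>
      simp only [msr]
      have := one_le_msr t
      nlinarith
  | @congRetry₂ u t t' h ih =>
      simp only [msr]
      have := one_le_msr u
      nlinarith
  | congRequest₀ h ih => simp only [msr]; omega
  | @congRequestArg t s i s' h ih =>
      simp only [msr]
      have h0 : ∀ j, msr (Function.update s i s' j)
          = Function.update (fun j => msr (s j)) i (msr s') j :=
        fun j => Function.apply_update (fun _ t => msr t) s i s' j
      have h1 : ∑ j, msr (Function.update s i s' j)
          = msr s' + ∑ j ∈ Finset.univ \ {i}, msr (s j) := by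
        simp only [h0]
        exact Finset.sum_update_of_mem (Finset.mem_univ i) _ _
      have h2 : ∑ j, msr (s j) = msr (s i) + ∑ j ∈ Finset.univ \ {i}, msr (s j) := by
        rw [Finset.sdiff_singleton_eq_erase]
        exact (Finset.add_sum_erase Finset.univ (fun j => msr (s j)) (Finset.mem_univ i)).symm
      rw [h1] at *
      omega

/-- The request-retry rewrite system is strongly normalizing
(for any fixed `n ≥ 1`): the converse of the rewrite relation is well-founded,
i.e. there is no infinite rewrite sequence. -/
theorem rrStep_strongly_normalizing (α : Type) (n : ℕ) (hn : 1 ≤ n) :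
    WellFounded (fun a b : RRTm α n => RRStep b a) := by
  exact Subrelation.wf (fun h => msr_decrease h) (InvImage.wf msr Nat.lt_wfRel.wf)
end

section
/- The parallelism rewrite system is strongly normalizing: fix a finite family of effect constructors e each with a fixed arity n_e, together with a binary constructor par. The rewrite relation generated, for each effect constructor e, by the rules (a) par(e(s1,...,s_{n_e}), t) ⇝ e(par(s1, t),...,par(s_{n_e}, t)) and (b) par(s, e(t1,...,t_{n_e})) ⇝ e(par(s, t1),...,par(s, t_{n_e})), closed under application in any subterm position, admits no infinite rewrite sequence. -/
/-- Terms of the parallelism effect system: leaves (variables/values, drawn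
from a type `α`), a binary constructor `par`, and a family of effect
constructors indexed by a (finite) type `E`, each `e : E` of fixed arity
`ar e`. -/
inductive ParTm (α E : Type) (ar : E → ℕ) : Type where
  | leaf : α → ParTm α E ar
  | par : ParTm α E ar → ParTm α E ar → ParTm α E ar
  | eff : (e : E) → (Fin (ar e) → ParTm α E ar) → ParTm α E ar

/-- The one-step rewrite relation: the compatible closure (closure under all
subterm contexts) of the rules, instantiated for every effect constructor `e`:
(a) `par(e(s₁,…,s_{nₑ}), t) ⇝ e(par(s₁, t),…,par(s_{nₑ}, t))` and
(b) `par(s, e(t₁,…,t_{nₑ})) ⇝ e(par(s, t₁),…,par(s, t_{nₑ}))`. -/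
inductive ParStep {α E : Type} {ar : E → ℕ} : ParTm α E ar → ParTm α E ar → Prop where
  | parLeft {e : E} {s : Fin (ar e) → ParTm α E ar} {t : ParTm α E ar} :
      ParStep (.par (.eff e s) t) (.eff e fun i => .par (s i) t)
  | parRight {s : ParTm α E ar} {e : E} {t : Fin (ar e) → ParTm α E ar} :
      ParStep (.par s (.eff e t)) (.eff e fun i => .par s (t i))
  | congPar₁ {s s' t : ParTm α E ar} :
      ParStep s s' → ParStep (.par s t) (.par s' t)
  | congPar₂ {s t t' : ParTm α E ar} :
      ParStep t t' → ParStep (.par s t) (.par s t')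
  | congEff {e : E} {s : Fin (ar e) → ParTm α E ar} {i : Fin (ar e)} {s' : ParTm α E ar} :
      ParStep (s i) s' → ParStep (.eff e s) (.eff e (Function.update s i s'))

def ParTm.mu {α E : Type} {ar : E → ℕ} : ParTm α E ar → ℕ
  | .leaf _ => 2
  | .par a b => a.mu * b.mu
  | .eff _ s => 2 + ∑ i, (s i).mu

lemma ParTm.two_le_mu {α E : Type} {ar : E → ℕ} : ∀ t : ParTm α E ar, 2 ≤ t.mu
  | .leaf _ => le_refl _
  | .par a b => le_trans (by norm_num)
      (Nat.mul_le_mul (ParTm.two_le_mu a) (ParTm.two_le_mu b))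
  | .eff _ _ => Nat.le_add_right _ _

lemma ParStep.mu_lt {α E : Type} {ar : E → ℕ} {s t : ParTm α E ar}
    (h : ParStep s t) : t.mu < s.mu := by
  induction h with
  | @parLeft e s t =>
      simp only [ParTm.mu]
      rw [add_mul, Finset.sum_mul]
      have ht := t.two_le_mu
      nlinarith [Finset.sum_nonneg (fun i (_ : i ∈ Finset.univ) =>
        Nat.zero_le ((ParTm.par (s i) t).mu))]
  | @parRight s e t =>
      simp only [ParTm.mu]
      rw [mul_add, Finset.mul_sum]
      have hs := s.two_le_mu
      nlinarith
  | congPar₁ _ ih =>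
      exact (Nat.mul_lt_mul_right (lt_of_lt_of_le (by norm_num) (ParTm.two_le_mu _))).mpr ih
  | congPar₂ _ ih =>
      exact (Nat.mul_lt_mul_left (lt_of_lt_of_le (by norm_num) (ParTm.two_le_mu _))).mpr ih
  | @congEff e s i s' _ ih =>
      simp only [ParTm.mu]
      have key : ∑ j, (Function.update s i s' j).mu < ∑ j, (s j).mu := by
        have h1 : (fun j => (Function.update s i s' j).mu) =
            Function.update (fun j => (s j).mu) i s'.mu := by
          funext j
          exact Function.apply_update (fun _ x => ParTm.mu x) s i s' j
        rw [h1, Finset.sum_update_of_mem (Finset.mem_univ i)]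
        have h2 := Finset.add_sum_erase Finset.univ (fun j => (s j).mu) (Finset.mem_univ i)
        simp only [Finset.sdiff_singleton_eq_erase] at *
        omega
      omega

/-- The parallelism rewrite system (for a finite family of effect
constructors of fixed arities, together with the binary constructor `par`) is
strongly normalizing: the converse of the rewrite relation is well-founded,
i.e. there is no infinite rewrite sequence. -/
theorem parStep_strongly_normalizing (α E : Type) [Fintype E] (ar : E → ℕ) :
    WellFounded (fun a b : ParTm α E ar => ParStep b a) := by
  have : Subrelation (fun a b : ParTm α E ar => ParStep b a)
      (InvImage (· < ·) ParTm.mu) := fun h => h.mu_lt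
  exact Subrelation.wf this (InvImage.wf _ Nat.lt_wfRel.wf)
end
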